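/- Rodrigues' formula: for any nonzero ω ∈ ℝ³ with θ = ‖ω‖, the matrix exponential satisfies exp(ω^∧) = I + (sin θ / θ) ω^∧ + ((1 − cos θ)/θ²) (ω^∧)². -/

import Mathlib

/-!
Since `(ω^∧)³ = -θ² ω^∧`, the odd powers of `ω^∧` are `(-θ²)ᵏ ω^∧` and the even powers from
the second on are `(-θ²)ᵏ (ω^∧)²`. The exponential series thus splits into `1` plus two scalar
series times `ω^∧` and `(ω^∧)²`, and these are the Taylor series of `sin θ / θ` and
`(1 - cos θ) / θ²`.
-/

open Matrix Real

/-- The hat operator mapping a vector in ℝ³ to a skew-symmetric 3×3 matrix. -/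
def hat (ω : Fin 3 → ℝ) : Matrix (Fin 3) (Fin 3) ℝ :=
  !![0, -ω 2, ω 1; ω 2, 0, -ω 0; -ω 1, ω 0, 0]

open Nat NormedSpace

section PowThree

variable {R 𝔸 : Type*} [CommSemiring R] [Semiring 𝔸] [Algebra R 𝔸] {A : 𝔸} {c : R}

theorem pow_two_mul_add_one_of_pow_three_eq_smul (h : A ^ 3 = c • A) (k : ℕ) :
    A ^ (2 * k + 1) = c ^ k • A := by
  induction k with
  | zero => simp
  | succ k ih =>
    rw [show 2 * (k + 1) + 1 = 2 * k + 1 + 2 by ring, pow_add, ih, smul_mul_assoc,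
      ← pow_succ' A 2, h, smul_smul, pow_succ]

theorem pow_two_mul_add_two_of_pow_three_eq_smul (h : A ^ 3 = c • A) (k : ℕ) :
    A ^ (2 * k + 2) = c ^ k • A ^ 2 := by
  rw [pow_succ, pow_two_mul_add_one_of_pow_three_eq_smul h, smul_mul_assoc, ← sq]

end PowThree

theorem Real.hasSum_sin_div_self {θ : ℝ} (hθ : θ ≠ 0) :
    HasSum (fun k : ℕ => (-θ ^ 2) ^ k / (2 * k + 1)!) (sin θ / θ) := by
  refine ((Real.hasSum_sin θ).div_const θ).congr_fun fun k => ?_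
  rw [neg_pow (θ ^ 2), ← pow_mul, pow_succ]
  field_simp

theorem Real.hasSum_one_sub_cos_div_sq {θ : ℝ} (hθ : θ ≠ 0) :
    HasSum (fun k : ℕ => (-θ ^ 2) ^ k / (2 * k + 2)!) ((1 - cos θ) / θ ^ 2) := by
  have hcos : HasSum (fun k : ℕ => (-θ ^ 2) ^ k / (2 * k)!) (cos θ) :=
    (Real.hasSum_cos θ).congr_fun fun k => by rw [neg_pow (θ ^ 2), pow_mul]
  have htail := ((hasSum_nat_add_iff' 1).mpr hcos).div_const (-θ ^ 2)
  rw [Finset.sum_range_one, show (cos θ - _) / -θ ^ 2 = (1 - cos θ) / θ ^ 2 by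
    field_simp; ring] at htail
  refine htail.congr_fun fun k => ?_
  rw [pow_succ, mul_add_one]
  field_simp
  ring

section Exp

variable {𝔸 : Type*} [Ring 𝔸] [Algebra ℝ 𝔸] [TopologicalSpace 𝔸] [IsTopologicalRing 𝔸]
  [ContinuousSMul ℝ 𝔸] [T2Space 𝔸]

theorem exp_eq_of_pow_three_eq_neg_sq_smul {A : 𝔸} {θ : ℝ} (hθ : θ ≠ 0)
    (h : A ^ 3 = (-θ ^ 2) • A) :
    exp A = 1 + (sin θ / θ) • A + ((1 - cos θ) / θ ^ 2) • A ^ 2 := by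
  have hodd : HasSum (fun k => ((2 * k + 1)! : ℝ)⁻¹ • A ^ (2 * k + 1)) ((sin θ / θ) • A) :=
    ((Real.hasSum_sin_div_self hθ).smul_const A).congr_fun fun k => by
      rw [pow_two_mul_add_one_of_pow_three_eq_smul h, smul_smul, div_eq_inv_mul]
  have heven : HasSum (fun k => ((2 * k)! : ℝ)⁻¹ • A ^ (2 * k))
      (1 + ((1 - cos θ) / θ ^ 2) • A ^ 2) := by
    rw [← hasSum_nat_add_iff' 1, Finset.sum_range_one, mul_zero, factorial_zero, cast_one,
      inv_one, pow_zero, one_smul, add_sub_cancel_left]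
    exact ((Real.hasSum_one_sub_cos_div_sq hθ).smul_const (A ^ 2)).congr_fun fun k => by
      rw [mul_add_one, pow_two_mul_add_two_of_pow_three_eq_smul h, smul_smul, div_eq_inv_mul]
  rw [exp_eq_tsum ℝ, add_right_comm]
  exact (HasSum.even_add_odd (f := fun n => (n ! : ℝ)⁻¹ • A ^ n) heven hodd).tsum_eq

end Exp

theorem hat_pow_three (ω : Fin 3 → ℝ) :
    hat ω ^ 3 = (-(ω 0 ^ 2 + ω 1 ^ 2 + ω 2 ^ 2)) • hat ω := by
  ext i j
  fin_cases i <;> fin_cases j <;>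
    simp [hat, pow_succ, Matrix.mul_apply, Fin.sum_univ_three] <;> ring

theorem rodrigues_formula (ω : Fin 3 → ℝ) (hω : ω ≠ 0)
    (θ : ℝ) (hθ : θ = Real.sqrt (ω 0 ^ 2 + ω 1 ^ 2 + ω 2 ^ 2)) :
    NormedSpace.exp (hat ω) =
      1 + (Real.sin θ / θ) • hat ω +
        ((1 - Real.cos θ) / θ^2) • (hat ω * hat ω) := by
  have hsq : θ ^ 2 = ω 0 ^ 2 + ω 1 ^ 2 + ω 2 ^ 2 := by
    rw [hθ, sq_sqrt (by positivity)]
  have hθ0 : θ ≠ 0 := by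
    rintro rfl
    refine hω (funext fun i => ?_)
    fin_cases i <;> simp <;> nlinarith [sq_nonneg (ω 0), sq_nonneg (ω 1), sq_nonneg (ω 2)]
  rw [← sq, exp_eq_of_pow_three_eq_neg_sq_smul hθ0 (hsq ▸ hat_pow_three ω)]
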